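/- arXiv:2602.12523 — 2 statements merged into one kernel-verified Lean document; each statement's English description precedes it below -/
import Mathlib

section
/- For all natural numbers a, b with a ≥ b + 2, one has f(a, b) > f(a − 1, b + 1). -/
namespace BallsBins

/-- `f a b` is the expected number of balls remaining in the two-bin uniform removal
process started from the assignment `(a, b)`:
`f (a, 0) = a`, `f (0, b) = b`, and `f (a, b) = ½ f (a-1, b) + ½ f (a, b-1)` for `a, b ≥ 1`. -/
noncomputable def f : ℕ → ℕ → ℝ
  | a, 0 => a
  | 0, b => b
  | a + 1, b + 1 => (1 / 2) * f a (b + 1) + (1 / 2) * f (a + 1) b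

lemma f_zero_right (a : ℕ) : f a 0 = a := by cases a <;> simp [f]

lemma f_zero_left (b : ℕ) : f 0 b = b := by cases b <;> simp [f]

lemma f_succ (a b : ℕ) : f (a + 1) (b + 1) = (1 / 2) * f a (b + 1) + (1 / 2) * f (a + 1) b := by
  rw [f]

lemma f_symm (a b : ℕ) : f a b = f b a := by
  obtain ⟨n, hn⟩ : ∃ n, a + b = n := ⟨_, rfl⟩
  induction n using Nat.strong_induction_on generalizing a b with
  | _ n ih =>
    match a, b with
    | a, 0 => rw [f_zero_right, f_zero_left]
    | 0, b + 1 => rw [f_zero_right, f_zero_left]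
    | a + 1, b + 1 =>
      rw [f_succ, f_succ b a]
      rw [ih (a + (b + 1)) (by omega) a (b + 1) rfl,
          ih ((a + 1) + b) (by omega) (a + 1) b rfl]
      ring

lemma f_one_le (a : ℕ) : f a 1 ≤ a + 1 := by
  induction a with
  | zero => simp [f]
  | succ a ih =>
    have h : f (a + 1) 1 = (1 / 2) * f a 1 + (1 / 2) * ((a : ℝ) + 1) := by
      rw [f_succ, f_zero_right]; push_cast; ring
    rw [h]; push_cast; linarith

lemma D_nonneg (a b : ℕ) (hab : b ≤ a) : f a (b + 1) ≤ f (a + 1) b := by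
  obtain ⟨n, hn⟩ : ∃ n, a + b = n := ⟨_, rfl⟩
  induction n using Nat.strong_induction_on generalizing a b with
  | _ n ih =>
    rcases eq_or_lt_of_le hab with heq | hlt
    · subst heq
      rw [f_symm]
    · cases b with
      | zero =>
        rw [f_zero_right]
        calc f a 1 ≤ (a : ℝ) + 1 := f_one_le a
          _ = ((a + 1 : ℕ) : ℝ) := by push_cast; ring
      | succ b =>
        obtain ⟨a', rfl⟩ : ∃ a', a = a' + 1 := ⟨a - 1, by omega⟩
        rw [f_succ, f_succ (a' + 1) b]
        have h1 := ih ((a' + 1) + b) (by omega) (a' + 1) b (by omega) rfl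
        have h2 := ih (a' + (b + 1)) (by omega) a' (b + 1) (by omega) rfl
        linarith

lemma D_pos (a b : ℕ) (hab : b + 1 ≤ a) : f a (b + 1) < f (a + 1) b := by
  obtain ⟨n, hn⟩ : ∃ n, a + b = n := ⟨_, rfl⟩
  induction n using Nat.strong_induction_on generalizing a b with
  | _ n ih =>
    cases b with
    | zero =>
      obtain ⟨a', rfl⟩ : ∃ a', a = a' + 1 := ⟨a - 1, by omega⟩
      rw [f_zero_right]
      have h : f (a' + 1) 1 = (1 / 2) * f a' 1 + (1 / 2) * ((a' : ℝ) + 1) := by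
        rw [f_succ, f_zero_right]; push_cast; ring
      have := f_one_le a'
      rw [h]; push_cast; linarith
    | succ b =>
      obtain ⟨a', rfl⟩ : ∃ a', a = a' + 1 := ⟨a - 1, by omega⟩
      rw [f_succ, f_succ (a' + 1) b]
      have h1 := ih ((a' + 1) + b) (by omega) (a' + 1) b (by omega) rfl
      have h2 := D_nonneg a' (b + 1) (by omega)
      linarith

/-- For all naturals `a, b` with `a ≥ b + 2`, one has
`f (a, b) > f (a - 1, b + 1)`. -/
theorem rebalancing_strictly_decreases (a b : ℕ) (h : b + 2 ≤ a) :
    f (a - 1) (b + 1) < f a b := by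
  obtain ⟨a', rfl⟩ : ∃ a', a = a' + 1 := ⟨a - 1, by omega⟩
  simpa using D_pos a' b (by omega)

end BallsBins
end

section
/- For every j ∉ {1, i} and every integer r ≥ 2, one has P(F^{r,1}_{1,j}) ≥ P(F^{1,r}_{1,j}). -/
/-!
A reflection argument. Split both events according to the round `t` at which condition (b) is
first triggered. Whether this happens at round `t` with prescribed contents of bins `1` and `j`
depends only on the first `t` selections, so each piece has probability `k⁻ᵗ` times the number of
admissible words of length `t`. Along a word ending with contents `(1, r)`, the difference of the
contents of bins `1` and `j` starts at `n₁ - n_j ≥ 0`, ends at `1 - r < 0` and moves by at most one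
per round, so the two bins tie before round `t`. Exchanging the roles of bins `1` and `j` from the
first tie on leaves every condition (b), the first tie and the first trigger time unchanged, so it
is an involution sending words ending with `(1, r)` to words ending with `(r, 1)`.
-/

open MeasureTheory ProbabilityTheory ENNReal

namespace BallsBins

variable {k : ℕ}

/-- Number of times bin `j` is selected during the first `t` rounds of `ω`. -/
def numSel (ω : ℕ → Fin k) (j : Fin k) (t : ℕ) : ℕ :=
  ((Finset.range t).filter (fun s => ω s = j)).card

/-- Content (possibly negative) of bin `j` at the end of round `t`, started from `n`. -/
def content (n : Fin k → ℕ) (ω : ℕ → Fin k) (j : Fin k) (t : ℕ) : ℤ :=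
  (n j : ℤ) - numSel ω j t

/-- The set of non-empty bins at the end of round `t`. -/
def nonemptyBins (n : Fin k → ℕ) (ω : ℕ → Fin k) (t : ℕ) : Finset (Fin k) :=
  Finset.univ.filter (fun j => 0 < content n ω j t)

/-- `T n ω` : the first round at which a unique non-empty bin remains (`⊤` if never). -/
noncomputable def T (n : Fin k → ℕ) (ω : ℕ → Fin k) : ℕ∞ :=
  sInf ((fun t : ℕ => (t : ℕ∞)) '' {t | (nonemptyBins n ω t).card = 1})

/-- `X n ω` : the number of balls remaining when the process stops, i.e. at round `T n ω`. -/
noncomputable def X (n : Fin k → ℕ) (ω : ℕ → Fin k) : ℕ :=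
  ∑ j, (n j - numSel ω j (T n ω).toNat)

/-- Condition (a): bin `b1` contains exactly one ball more than bin `i` at the end of round `t`. -/
def condA (n : Fin k → ℕ) (b1 i : Fin k) (ω : ℕ → Fin k) (t : ℕ) : Prop :=
  content n ω b1 t = content n ω i t + 1

/-- Condition (b): at the end of round `t` there are exactly two non-empty bins and one of
them contains exactly one ball. -/
def condB (n : Fin k → ℕ) (ω : ℕ → Fin k) (t : ℕ) : Prop :=
  (nonemptyBins n ω t).card = 2 ∧ ∃ j, content n ω j t = 1

/-- `S n b1 i ω` : the first round at the end of which condition (a) or (b) occurs. -/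
noncomputable def S (n : Fin k → ℕ) (b1 i : Fin k) (ω : ℕ → Fin k) : ℕ∞ :=
  sInf ((fun t : ℕ => (t : ℕ∞)) '' {t | condA n b1 i ω t ∨ condB n ω t})

/-- `Ca n b1 i` : the event that condition (a) occurs at round `S n b1 i`. -/
def Ca (n : Fin k → ℕ) (b1 i : Fin k) : Set (ℕ → Fin k) :=
  {ω | ∃ t : ℕ, S n b1 i ω = (t : ℕ∞) ∧ condA n b1 i ω t}

/-- The event that bins `p` and `q` are the last two non-empty bins. -/
def lastTwo (n : Fin k → ℕ) (p q : Fin k) : Set (ℕ → Fin k) :=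
  {ω | ∃ t : ℕ, nonemptyBins n ω t = {p, q}}

/-- The first round at which condition (b) is triggered (`⊤` if never). -/
noncomputable def TB (n : Fin k → ℕ) (ω : ℕ → Fin k) : ℕ∞ :=
  sInf ((fun t : ℕ => (t : ℕ∞)) '' {t | condB n ω t})

/-- `Fab n b1 j a b` : the event that bins `b1` and `j` are the last two non-empty bins and,
at the first round at which condition (b) is triggered, bins `b1` and `j` contain `a` and `b`
balls respectively. -/
def Fab (n : Fin k → ℕ) (b1 j : Fin k) (a b : ℕ) : Set (ℕ → Fin k) :=
  lastTwo n b1 j ∩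
    {ω | ∃ t : ℕ, TB n ω = (t : ℕ∞) ∧ content n ω b1 t = (a : ℤ) ∧ content n ω j t = (b : ℤ)}

/-- The assignment `n - e_{b1} + e_i`. -/
def shift (n : Fin k → ℕ) (b1 i : Fin k) : Fin k → ℕ :=
  Function.update (Function.update n b1 (n b1 - 1)) i (n i + 1)

/-- The uniform probability measure on `Fin k`. -/
noncomputable def unifFin (k : ℕ) : Measure (Fin k) := (k : ℝ≥0∞)⁻¹ • Measure.count

/-- `IsIIDUniform μ` : `μ` is a probability measure on `[k]^ℕ` under which the coordinates
are independent and each is uniformly distributed on `Fin k`; this uniquely characterizes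
the product of uniform measures. -/
structure IsIIDUniform (μ : Measure (ℕ → Fin k)) : Prop where
  prob : IsProbabilityMeasure μ
  indep : iIndepFun (fun (t : ℕ) (ω : ℕ → Fin k) => ω t) μ
  unif : ∀ t : ℕ, μ.map (fun ω : ℕ → Fin k => ω t) = unifFin k


open Function Set

lemma encard_image_le_of_factorsThrough {α β : Type*} {f g : α → β} (h : g.FactorsThrough f)
    (s : Set α) : (g '' s).encard ≤ (f '' s).encard := by
  have hg : g '' s = extend f g id '' (f '' s) := by
    rw [image_image]
    exact image_congr fun a _ => (h.extend_apply id a).symm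
  exact hg ▸ encard_image_le _ _

section Cylinder

variable {μ : Measure (ℕ → Fin k)}

lemma measurable_domRestrict_Iio (t : ℕ) :
    Measurable ((Iio t).domRestrict : (ℕ → Fin k) → (Iio t → Fin k)) :=
  measurable_pi_lambda _ fun s => measurable_pi_apply (s : ℕ)

lemma IsIIDUniform.measure_coord_eq (hμ : IsIIDUniform μ) (s : ℕ) (a : Fin k) :
    μ ((fun ω : ℕ → Fin k => ω s) ⁻¹' {a}) = (k : ℝ≥0∞)⁻¹ := by
  rw [← Measure.map_apply (measurable_pi_apply s) (measurableSet_singleton a), hμ.unif s]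
  simp [unifFin]

lemma IsIIDUniform.map_domRestrict_Iio (hμ : IsIIDUniform μ) (t : ℕ) :
    μ.map (Iio t).domRestrict = (k : ℝ≥0∞)⁻¹ ^ t • Measure.count := by
  refine Measure.ext_iff_singleton.mpr fun w => ?_
  have hcyl : (Iio t).domRestrict ⁻¹' ({w} : Set (Iio t → Fin k)) =
      ⋂ s ∈ (Finset.univ : Finset (Iio t)), (fun ω : ℕ → Fin k => ω s) ⁻¹' {w s} := by
    ext ω
    simp [funext_iff]
  rw [Measure.map_apply (measurable_domRestrict_Iio t) (measurableSet_singleton w), hcyl,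
    (hμ.indep.precomp Subtype.val_injective).measure_inter_preimage_eq_mul _
      fun _ _ => measurableSet_singleton _]
  simp [hμ.measure_coord_eq]

variable {t : ℕ} {A B : Set (ℕ → Fin k)}

lemma eq_preimage_image_domRestrict_Iio (hA : DependsOn (· ∈ A) (Iio t)) :
    (Iio t).domRestrict ⁻¹' ((Iio t).domRestrict '' A) = A := by
  refine Subset.antisymm (fun ω ⟨ω', hω', heq⟩ => ?_) (subset_preimage_image _ _)
  exact cast (hA fun s hs => congrFun heq ⟨s, hs⟩) hω'

lemma measurableSet_of_dependsOn (hA : DependsOn (· ∈ A) (Iio t)) : MeasurableSet A :=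
  eq_preimage_image_domRestrict_Iio hA ▸
    measurable_domRestrict_Iio t (Set.to_countable _).measurableSet

lemma IsIIDUniform.measure_eq_of_dependsOn (hμ : IsIIDUniform μ)
    (hA : DependsOn (· ∈ A) (Iio t)) :
    μ A = (k : ℝ≥0∞)⁻¹ ^ t * ((Iio t).domRestrict '' A).encard := by
  conv_lhs => rw [← eq_preimage_image_domRestrict_Iio hA]
  rw [← Measure.map_apply (measurable_domRestrict_Iio t) (Set.to_countable _).measurableSet,
    hμ.map_domRestrict_Iio, Measure.smul_apply, smul_eq_mul,
    Measure.count_apply (Set.to_countable _).measurableSet]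

lemma IsIIDUniform.measure_le_of_subset_image (hμ : IsIIDUniform μ)
    (hA : DependsOn (· ∈ A) (Iio t)) (hB : DependsOn (· ∈ B) (Iio t))
    {Φ : (ℕ → Fin k) → ℕ → Fin k} (hΦ : DependsOn ((Iio t).domRestrict ∘ Φ) (Iio t))
    (hAB : A ⊆ Φ '' B) : μ A ≤ μ B := by
  rw [hμ.measure_eq_of_dependsOn hA, hμ.measure_eq_of_dependsOn hB]
  refine mul_le_mul_right (ENat.toENNReal_le.mpr ?_) _
  calc ((Iio t).domRestrict '' A).encard ≤ ((Iio t).domRestrict ∘ Φ '' B).encard := by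
        rw [image_comp]; exact encard_le_encard (image_mono hAB)
    _ ≤ ((Iio t).domRestrict '' B).encard :=
        encard_image_le_of_factorsThrough (dependsOn_iff_factorsThrough.mp hΦ) B

end Cylinder

section Contents

variable {n : Fin k → ℕ}

lemma content_zero (n : Fin k → ℕ) (ω : ℕ → Fin k) (m : Fin k) : content n ω m 0 = n m := by
  simp [content, numSel]

lemma content_succ (n : Fin k → ℕ) (ω : ℕ → Fin k) (m : Fin k) (s : ℕ) :
    content n ω m (s + 1) = content n ω m s - if ω s = m then 1 else 0 := by
  simp only [content, numSel, Finset.range_add_one, Finset.filter_insert]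
  split_ifs <;> simp [Finset.card_insert_of_notMem, sub_add_eq_sub_sub]

lemma dependsOn_content (n : Fin k → ℕ) (m : Fin k) (t : ℕ) :
    DependsOn (content n · m t) (Iio t) := fun ω ω' h => by
  simp only [content, numSel]
  congr 3
  exact Finset.filter_congr fun s hs => by rw [h s (by simpa using hs)]

lemma dependsOn_condB (n : Fin k → ℕ) (t : ℕ) : DependsOn (condB n · t) (Iio t) :=
  fun ω ω' h => by
  simp only [condB, nonemptyBins, dependsOn_content n _ t h]

lemma sInf_image_natCast_eq_iff {S : Set ℕ} {t : ℕ} :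
    sInf (((↑) : ℕ → ℕ∞) '' S) = t ↔ IsLeast S t := by
  have hcast : ∀ {m}, IsLeast S m → sInf (((↑) : ℕ → ℕ∞) '' S) = m := fun hm =>
    (Nat.strictMono_cast.map_isLeast.mpr hm).csInf_eq
  refine ⟨fun h => ?_, hcast⟩
  rcases S.eq_empty_or_nonempty with rfl | hne
  · simp at h
  · have hleast := isLeast_csInf hne
    rwa [← Nat.cast_injective ((hcast hleast).symm.trans h)]

lemma isLeast_setOf_iff {P : ℕ → Prop} {t : ℕ} :
    IsLeast {s | P s} t ↔ P t ∧ ∀ s < t, ¬ P s :=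
  ⟨fun h => ⟨h.1, fun _ hs hP => (h.2 hP).not_gt hs⟩,
    fun h => ⟨h.1, fun _ hs => not_lt.1 fun hlt => h.2 _ hlt hs⟩⟩

lemma TB_eq_iff {ω : ℕ → Fin k} {t : ℕ} :
    TB n ω = t ↔ condB n ω t ∧ ∀ s < t, ¬ condB n ω s :=
  sInf_image_natCast_eq_iff.trans isLeast_setOf_iff

lemma dependsOn_TB_eq (n : Fin k → ℕ) (t : ℕ) : DependsOn (TB n · = t) (Iio t) :=
  fun ω ω' h => by
  have hB : ∀ s ≤ t, condB n ω s = condB n ω' s := fun s hs =>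
    dependsOn_condB n s fun u hu => h u (lt_of_lt_of_le hu hs)
  simp only [TB_eq_iff, hB t le_rfl]
  congr! 3 with s hs
  rw [hB s hs.le]

end Contents

lemma exists_lt_eq_zero_of_abs_sub_le_one {f : ℕ → ℤ} (hstep : ∀ s, |f (s + 1) - f s| ≤ 1)
    (h0 : 0 ≤ f 0) {t : ℕ} (ht : f t < 0) : ∃ s < t, f s = 0 := by
  induction t with
  | zero => omega
  | succ t ih =>
    by_cases hft : f t < 0
    · obtain ⟨s, hs, hfs⟩ := ih hft
      exact ⟨s, by omega, hfs⟩
    · have := abs_le.mp (hstep t)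
      exact ⟨t, by omega, by omega⟩

section Reflection

variable {n : Fin k → ℕ} {p q : Fin k} {τ : ℕ} {ω : ℕ → Fin k}

lemma abs_content_sub_content_succ_le (n : Fin k → ℕ) (ω : ℕ → Fin k) (p q : Fin k) (s : ℕ) :
    |(content n ω p (s + 1) - content n ω q (s + 1)) - (content n ω p s - content n ω q s)|
      ≤ 1 := by
  simp only [content_succ]
  split_ifs <;> simp

lemma condB_iff_of_content_eq_comp {ω' : ℕ → Fin k} {s : ℕ} (e : Equiv.Perm (Fin k))
    (h : ∀ m, content n ω' m s = content n ω (e m) s) : condB n ω' s ↔ condB n ω s := by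
  have hbins : nonemptyBins n ω' s = (nonemptyBins n ω s).map e.symm.toEmbedding := by
    ext m
    simp [nonemptyBins, Finset.mem_map_equiv, h]
  simp only [condB, hbins, Finset.card_map, h]
  exact and_congr_right' ⟨fun ⟨m, hm⟩ => ⟨e m, hm⟩, fun ⟨m, hm⟩ => ⟨e.symm m, by simpa⟩⟩

def swapFrom (p q : Fin k) (τ : ℕ) (ω : ℕ → Fin k) : ℕ → Fin k :=
  fun s => if τ ≤ s then Equiv.swap p q (ω s) else ω s

lemma swapFrom_swapFrom : swapFrom p q τ (swapFrom p q τ ω) = ω := by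
  funext s
  unfold swapFrom
  split_ifs <;> simp

lemma content_swapFrom (hτ : content n ω p τ = content n ω q τ) (m : Fin k) (s : ℕ) :
    content n (swapFrom p q τ ω) m s
      = content n ω (if τ ≤ s then Equiv.swap p q m else m) s := by
  have hpre : ∀ u ≤ τ, content n (swapFrom p q τ ω) m u = content n ω m u := fun u hu =>
    dependsOn_content n m u fun v hv => if_neg (by simp at hv; omega)
  rcases lt_or_ge s τ with hs | hs
  · rw [if_neg (by omega), hpre s hs.le]
  rw [if_pos hs]
  induction s, hs using Nat.le_induction with
  | base =>
    rw [hpre τ le_rfl, Equiv.swap_apply_def]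
    split_ifs with hp hq
    · rw [hp, hτ]
    · rw [hq, hτ]
    · rfl
  | succ s hs ih =>
    simp only [content_succ, ih, swapFrom, if_pos hs, Equiv.swap_apply_eq_iff]

lemma condB_swapFrom_iff (hτ : content n ω p τ = content n ω q τ) (s : ℕ) :
    condB n (swapFrom p q τ ω) s ↔ condB n ω s := by
  by_cases hs : τ ≤ s
  · exact condB_iff_of_content_eq_comp (Equiv.swap p q) fun m => by
      rw [content_swapFrom hτ, if_pos hs]
  · exact condB_iff_of_content_eq_comp 1 fun m => by
      rw [content_swapFrom hτ, if_neg hs]; rfl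

lemma TB_swapFrom (hτ : content n ω p τ = content n ω q τ) :
    TB n (swapFrom p q τ ω) = TB n ω := by
  simp only [TB, condB_swapFrom_iff hτ]

lemma tie_swapFrom_iff (hτ : content n ω p τ = content n ω q τ) (s : ℕ) :
    content n (swapFrom p q τ ω) p s = content n (swapFrom p q τ ω) q s
      ↔ content n ω p s = content n ω q s := by
  simp only [content_swapFrom hτ]
  split_ifs
  · simp only [Equiv.swap_apply_left, Equiv.swap_apply_right, eq_comm]
  · rfl

noncomputable def firstTie (n : Fin k → ℕ) (p q : Fin k) (t : ℕ) (ω : ℕ → Fin k) : ℕ :=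
  sInf {s | s < t ∧ content n ω p s = content n ω q s}

lemma firstTie_swapFrom {t : ℕ} (hτ : content n ω p τ = content n ω q τ) :
    firstTie n p q t (swapFrom p q τ ω) = firstTie n p q t ω := by
  simp only [firstTie, tie_swapFrom_iff hτ]

noncomputable def reflect (n : Fin k → ℕ) (p q : Fin k) (t : ℕ) (ω : ℕ → Fin k) : ℕ → Fin k :=
  swapFrom p q (firstTie n p q t ω) ω

lemma dependsOn_reflect (n : Fin k → ℕ) (p q : Fin k) (t : ℕ) :
    DependsOn ((Iio t).domRestrict ∘ reflect n p q t) (Iio t) := fun ω ω' h => by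
  have hcontent : ∀ m, ∀ s < t, content n ω m s = content n ω' m s := fun m s hs =>
    dependsOn_content n m s fun u hu => h u (lt_trans hu hs)
  have htie : firstTie n p q t ω = firstTie n p q t ω' := by
    unfold firstTie
    congr 1
    ext s
    exact and_congr_right fun hs => by rw [hcontent p s hs, hcontent q s hs]
  funext s
  simp [reflect, swapFrom, htie, h s s.2]

end Reflection

section Trigger

variable {n : Fin k → ℕ} {p q : Fin k} {t : ℕ}

def triggerAt (n : Fin k → ℕ) (p q : Fin k) (a b t : ℕ) : Set (ℕ → Fin k) :=
  {ω | TB n ω = t ∧ content n ω p t = a ∧ content n ω q t = b}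

lemma dependsOn_mem_triggerAt (n : Fin k → ℕ) (p q : Fin k) (a b t : ℕ) :
    DependsOn (· ∈ triggerAt n p q a b t) (Iio t) := fun ω ω' h => by
  simp only [triggerAt, mem_ofPred_eq, dependsOn_TB_eq n t h, dependsOn_content n p t h,
    dependsOn_content n q t h]

lemma pairwise_disjoint_triggerAt (n : Fin k → ℕ) (p q : Fin k) (a b : ℕ) :
    Pairwise (Disjoint on triggerAt n p q a b) := fun t t' hne =>
  disjoint_left.mpr fun _ h h' => hne (by exact_mod_cast h.1.symm.trans h'.1)

lemma Fab_subset_iUnion_triggerAt (n : Fin k → ℕ) (p q : Fin k) (a b : ℕ) :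
    Fab n p q a b ⊆ ⋃ t, triggerAt n p q a b t := fun _ ⟨_, t, ht⟩ => mem_iUnion.mpr ⟨t, ht⟩

lemma iUnion_triggerAt_subset_Fab {a b : ℕ} (ha : 0 < a) (hb : 0 < b) (hab : a ≠ b) :
    ⋃ t, triggerAt n p q a b t ⊆ Fab n p q a b := by
  refine iUnion_subset fun t ω hω => ⟨⟨t, ?_⟩, t, hω⟩
  obtain ⟨hTB, hp, hq⟩ := hω
  have hpq : p ≠ q := by rintro rfl; exact hab (by exact_mod_cast hp.symm.trans hq)
  have hsub : {p, q} ⊆ nonemptyBins n ω t := by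
    simp [Finset.insert_subset_iff, nonemptyBins, hp, hq, ha, hb]
  refine (Finset.eq_of_subset_of_card_le hsub ?_).symm
  rw [(TB_eq_iff.mp hTB).1.1, Finset.card_pair hpq]

lemma reflect_mem_triggerAt {r : ℕ} (hn : n q ≤ n p) (hr : 1 < r) {ω : ℕ → Fin k}
    (hω : ω ∈ triggerAt n p q 1 r t) :
    reflect n p q t ω ∈ triggerAt n p q r 1 t ∧ reflect n p q t (reflect n p q t ω) = ω := by
  obtain ⟨hTB, hp, hq⟩ := hω
  have hties : {s | s < t ∧ content n ω p s = content n ω q s}.Nonempty := by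
    obtain ⟨s, hs, htie⟩ := exists_lt_eq_zero_of_abs_sub_le_one
      (f := fun s => content n ω p s - content n ω q s)
      (abs_content_sub_content_succ_le n ω p q)
      (by simp [content_zero, hn]) (by rw [hp, hq]; push_cast; omega)
    exact ⟨s, hs, sub_eq_zero.mp htie⟩
  obtain ⟨hτt, hτ⟩ : firstTie n p q t ω ∈ {s | s < t ∧ content n ω p s = content n ω q s} :=
    Nat.sInf_mem hties
  refine ⟨⟨(TB_swapFrom hτ).trans hTB, ?_, ?_⟩, ?_⟩
  · rw [reflect, content_swapFrom hτ, if_pos hτt.le, Equiv.swap_apply_left, hq]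
  · rw [reflect, content_swapFrom hτ, if_pos hτt.le, Equiv.swap_apply_right, hp]
  · rw [reflect, reflect, firstTie_swapFrom hτ, swapFrom_swapFrom]

lemma triggerAt_subset_image_reflect {r : ℕ} (hn : n q ≤ n p) (hr : 1 < r) :
    triggerAt n p q 1 r t ⊆ reflect n p q t '' triggerAt n p q r 1 t := fun _ hω =>
  ⟨_, (reflect_mem_triggerAt hn hr hω).1, (reflect_mem_triggerAt hn hr hω).2⟩

end Trigger

theorem prob_Fr1_ge_F1r
    {k : ℕ} (n : Fin k → ℕ) (b1 : Fin k)
    (hmax : ∀ j : Fin k, n j ≤ n b1)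
    (μ : Measure (ℕ → Fin k)) (hμ : IsIIDUniform μ)
    (j : Fin k) (r : ℕ) (hr : 2 ≤ r) :
    μ (Fab n b1 j 1 r) ≤ μ (Fab n b1 j r 1) := by
  have hmeas : ∀ a b, ∀ t, MeasurableSet (triggerAt n b1 j a b t) := fun a b t =>
    measurableSet_of_dependsOn (dependsOn_mem_triggerAt n b1 j a b t)
  calc μ (Fab n b1 j 1 r) ≤ μ (⋃ t, triggerAt n b1 j 1 r t) :=
        measure_mono (Fab_subset_iUnion_triggerAt n b1 j 1 r)
    _ = ∑' t, μ (triggerAt n b1 j 1 r t) :=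
        measure_iUnion (pairwise_disjoint_triggerAt n b1 j 1 r) (hmeas 1 r)
    _ ≤ ∑' t, μ (triggerAt n b1 j r 1 t) := ENNReal.tsum_le_tsum fun t =>
        hμ.measure_le_of_subset_image (dependsOn_mem_triggerAt n b1 j 1 r t)
          (dependsOn_mem_triggerAt n b1 j r 1 t) (dependsOn_reflect n b1 j t)
          (triggerAt_subset_image_reflect (hmax j) hr)
    _ = μ (⋃ t, triggerAt n b1 j r 1 t) :=
        (measure_iUnion (pairwise_disjoint_triggerAt n b1 j r 1) (hmeas r 1)).symm
    _ ≤ μ (Fab n b1 j r 1) :=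
        measure_mono (iUnion_triggerAt_subset_Fab (by omega) one_pos (by omega))

end BallsBins
end
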